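/- For any non-loop edge e = uv_0 of G, the map sending an acyclic orientation D of G with unique sink at v_0 to D∖e if D∖e has unique sink v_0, and to D/e otherwise, is a bijection between A(G, v_0) and the disjoint union A(G∖e, v_0) ⊎ A(G/e, v_0), where the contracted vertex of G/e is labeled v_0. -/

import Mathlib

open Finset

attribute [local instance] Classical.propDecidable

/-- Homogeneous degree-`d` noncommutative symmetric functions, viewed as
coefficient functions on words of length `d` in the variables. -/
abbrev NCF (d : ℕ) := (Fin d → ℕ) → ℚ

/-- A coloring is proper for the edge family `ends` if the endpoints of every
edge receive distinct colors. -/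
def Proper {d : ℕ} {ε : Type*} {C : Type*} (ends : ε → Sym2 (Fin d)) (w : Fin d → C) : Prop :=
  ∀ (e : ε) (i j : Fin d), ends e = s(i, j) → w i ≠ w j

/-- The noncommutative chromatic symmetric function `Y_G`. -/
noncomputable def Y {d : ℕ} {ε : Type*} (ends : ε → Sym2 (Fin d)) : NCF d :=
  fun w => if Proper ends w then 1 else 0

/-- Noncommutative monomial symmetric function indexed by a set partition. -/
noncomputable def mFun {d : ℕ} (π : Setoid (Fin d)) : NCF d :=
  fun w => if (∀ i j, w i = w j ↔ π i j) then 1 else 0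

/-- Noncommutative power sum symmetric function indexed by a set partition. -/
noncomputable def pFun {d : ℕ} (π : Setoid (Fin d)) : NCF d :=
  fun w => if (∀ i j, π i j → w i = w j) then 1 else 0

/-- Noncommutative elementary symmetric function indexed by a set partition. -/
noncomputable def eFun {d : ℕ} (π : Setoid (Fin d)) : NCF d :=
  fun w => if (∀ i j, i ≠ j → π i j → w i ≠ w j) then 1 else 0

noncomputable instance setoidFintype (d : ℕ) : Fintype (Setoid (Fin d)) :=
  Fintype.ofInjective (fun s : Setoid (Fin d) => (s : Fin d → Fin d → Prop))
    (fun s t h => Setoid.ext fun a b => by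
      have := congrFun (congrFun h a) b; simpa using this.to_iff)

/-- Position action of a permutation on words/NCFs. -/
noncomputable def act {d : ℕ} (δ : Equiv.Perm (Fin d)) (f : NCF d) : NCF d :=
  fun w => f (w ∘ δ)

/-- The induction operator `↑`, repeating the last variable. -/
noncomputable def up {n : ℕ} (f : NCF (n + 1)) : NCF (n + 2) :=
  fun w => if w (Fin.last (n + 1)) = w ⟨n, by omega⟩ then f (fun i => w i.castSucc) else 0

/-- Vertex map collapsing the last vertex onto the next-to-last one (for contraction). -/
def collapse {n : ℕ} : Fin (n + 2) → Fin (n + 1) :=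
  fun i => if h : (i : ℕ) < n + 1 then ⟨i, h⟩ else ⟨n, by omega⟩

/-- The partition of `[d]` into connected components of the spanning subgraph with edge set `S`. -/
def components {d : ℕ} {ε : Type*} (ends : ε → Sym2 (Fin d)) (S : Finset ε) :
    Setoid (Fin d) :=
  Relation.EqvGen.setoid (fun i j => ∃ e ∈ S, ends e = s(i, j))

/-- The size of the block of `π` containing `i`. -/
noncomputable def blockCard {n : ℕ} (π : Setoid (Fin n)) (i : Fin n) : ℕ :=
  (Finset.univ.filter (fun j => π i j)).card

/-- The multiset of block sizes (the type `λ(π)`) of a set partition. -/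
noncomputable def sizes {n : ℕ} (π : Setoid (Fin n)) : Multiset ℕ :=
  (Finset.univ.image (fun i => Finset.univ.filter (fun j => π i j))).val.map Finset.card

/-- `σ ≡ᵢ τ` : same type and blocks containing `i` of equal size. -/
def cls {n : ℕ} (i : Fin n) (σ τ : Setoid (Fin n)) : Prop :=
  sizes σ = sizes τ ∧ blockCard σ i = blockCard τ i

/-- Congruence modulo `i` of noncommutative symmetric functions: the amalgamated
coefficients of their `e`-expansions agree on every `≡ᵢ`-class. -/
noncomputable def EquivI {n : ℕ} (i : Fin n) (F G : NCF n) : Prop :=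
  ∃ a b : Setoid (Fin n) → ℚ,
    F = ∑ τ : Setoid (Fin n), a τ • eFun τ ∧
    G = ∑ τ : Setoid (Fin n), b τ • eFun τ ∧
    ∀ τ, (∑ σ : Setoid (Fin n), if cls i σ τ then a σ else 0)
        = ∑ σ : Setoid (Fin n), if cls i σ τ then b σ else 0

/-- `(e)`-positivity with respect to the congruence modulo `i`. -/
noncomputable def EPos {n : ℕ} (i : Fin n) (F : NCF n) : Prop :=
  ∃ a : Setoid (Fin n) → ℚ,
    F = ∑ τ : Setoid (Fin n), a τ • eFun τ ∧
    ∀ τ, 0 ≤ ∑ σ : Setoid (Fin n), if cls i σ τ then a σ else 0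

/-- `(e)`-positivity of a labeled graph: for some labeling and some congruence. -/
noncomputable def EPosG {d : ℕ} {ε : Type*} (ends : ε → Sym2 (Fin d)) : Prop :=
  ∃ (δ : Equiv.Perm (Fin d)) (i : Fin d),
    EPos i (Y (fun e => (ends e).map δ))

/-- Extend a partition of `{0,…,n}` to one of `{0,…,n+m}`: old blocks are kept,
the new elements (indices `≥ n+1`) satisfying `Q` are merged into the block of
the old last element `n`, and the remaining new elements form singletons. -/
def extendB {n : ℕ} (m : ℕ) (π : Setoid (Fin (n + 1))) (Q : ℕ → Prop) :
    Setoid (Fin (n + 1 + m)) where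
  r x y := x = y ∨
    (∃ (hx : (x : ℕ) < n + 1) (hy : (y : ℕ) < n + 1), π ⟨x, hx⟩ ⟨y, hy⟩) ∨
    (((∃ hx : (x : ℕ) < n + 1, π ⟨x, hx⟩ (Fin.last n)) ∨ (n + 1 ≤ (x : ℕ) ∧ Q (x : ℕ))) ∧
     ((∃ hy : (y : ℕ) < n + 1, π ⟨y, hy⟩ (Fin.last n)) ∨ (n + 1 ≤ (y : ℕ) ∧ Q (y : ℕ))))
  iseqv := by
    constructor
    · intro x; exact Or.inl rfl
    · rintro x y (rfl | ⟨hx, hy, h⟩ | ⟨h1, h2⟩)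
      · exact Or.inl rfl
      · exact Or.inr (Or.inl ⟨hy, hx, π.symm h⟩)
      · exact Or.inr (Or.inr ⟨h2, h1⟩)
    · rintro x y z (rfl | ⟨hx, hy, h⟩ | ⟨h1, h2⟩) h'
      · exact h'
      · rcases h' with rfl | ⟨hy', hz, h''⟩ | ⟨h1', h2'⟩
        · exact Or.inr (Or.inl ⟨hx, hy, h⟩)
        · exact Or.inr (Or.inl ⟨hx, hz, π.trans h h''⟩)
        · rcases h1' with ⟨hy', hB⟩ | ⟨hge, _⟩
          · exact Or.inr (Or.inr ⟨Or.inl ⟨hx, π.trans h hB⟩, h2'⟩)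
          · omega
      · rcases h' with rfl | ⟨hy', hz, h''⟩ | ⟨h1', h2'⟩
        · exact Or.inr (Or.inr ⟨h1, h2⟩)
        · rcases h2 with ⟨hy2, hB⟩ | ⟨hge, _⟩
          · exact Or.inr (Or.inr ⟨h1, Or.inl ⟨hz, π.trans (π.trans (π.symm h'') hB) (π.refl _)⟩⟩)
          · omega
        · exact Or.inr (Or.inr ⟨h1, h2'⟩)

/-- `π + (n+1)` : insert the new element `n+1` into the block containing `n`. -/
def addLast {n : ℕ} (π : Setoid (Fin (n + 1))) : Setoid (Fin (n + 2)) :=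
  extendB 1 π (fun _ => True)

/-- `π / (n+1)` : add the new element `n+1` as a singleton block. -/
def addSingleton {n : ℕ} (π : Setoid (Fin (n + 1))) : Setoid (Fin (n + 2)) :=
  extendB 1 π (fun _ => False)

/-- `σ / (d+1),…,(d+m)` : add the new elements as one additional block. -/
def addBlock {d : ℕ} (m : ℕ) (σ : Setoid (Fin d)) : Setoid (Fin (d + m)) where
  r x y := (∃ (hx : (x : ℕ) < d) (hy : (y : ℕ) < d), σ ⟨x, hx⟩ ⟨y, hy⟩) ∨
    (d ≤ (x : ℕ) ∧ d ≤ (y : ℕ))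
  iseqv := by
    constructor
    · intro x
      by_cases h : (x : ℕ) < d
      · exact Or.inl ⟨h, h, σ.refl _⟩
      · exact Or.inr ⟨by omega, by omega⟩
    · rintro x y (⟨hx, hy, h⟩ | ⟨hx, hy⟩)
      · exact Or.inl ⟨hy, hx, σ.symm h⟩
      · exact Or.inr ⟨hy, hx⟩
    · rintro x y z (⟨hx, hy, h⟩ | ⟨hx, hy⟩) (⟨hy', hz, h'⟩ | ⟨hy', hz⟩)
      · exact Or.inl ⟨hx, hz, σ.trans h h'⟩
      · omega
      · omega
      · exact Or.inr ⟨hx, hz⟩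

noncomputable instance setoidLFO (d : ℕ) : LocallyFiniteOrder (Setoid (Fin d)) :=
  Fintype.toLocallyFiniteOrder

/-- The Möbius function of the lattice of set partitions, with values in `ℚ`. -/
noncomputable def muS {d : ℕ} (a b : Setoid (Fin d)) : ℚ :=
  IncidenceAlgebra.mu ℚ a b

/-- Falling factorial `⟨m⟩_i = m(m-1)⋯(m-i+1)` as a rational number. -/
def ffact (m i : ℕ) : ℚ := ∏ j ∈ Finset.range i, ((m : ℚ) - j)

/-- Rising factorial `(b)_i = b(b+1)⋯(b+i-1)` as a rational number. -/
def rfact (b i : ℕ) : ℚ := ∏ j ∈ Finset.range i, ((b : ℚ) + j)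

/-- The path `P_{n+1}` with edges `v_i v_{i+1}`. -/
def pathEnds (n : ℕ) : Fin n → Sym2 (Fin (n + 1)) :=
  fun e => s(e.castSucc, e.succ)

/-- The cycle `C_{n+1}` with edges `v_i v_{i+1}` (indices mod `n+1`). -/
def cycleEnds (n : ℕ) : Fin (n + 1) → Sym2 (Fin (n + 1)) :=
  fun i => s(i, i + 1)

/-- The commutative chromatic symmetric function `X_G` in `N` variables. -/
noncomputable def Xcomm {d : ℕ} {ε : Type*} (ends : ε → Sym2 (Fin d)) (N : ℕ) :
    MvPolynomial (Fin N) ℚ :=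
  ∑ κ : Fin d → Fin N, if Proper ends κ then ∏ i, MvPolynomial.X (κ i) else 0

section Orientations

variable {V : Type*} {ε : Type*}

/-- `o` is an orientation of the graph with edge endpoints `ends`. -/
def IsOrient (ends : ε → Sym2 V) (o : ε → V × V) : Prop :=
  ∀ e, s((o e).1, (o e).2) = ends e

/-- An orientation is acyclic when it admits no directed cycle. -/
def Acyclic (o : ε → V × V) : Prop :=
  ∀ v : V, ¬ Relation.TransGen (fun a b => ∃ e, o e = (a, b)) v v

/-- `v` is a sink: every edge incident to `v` is directed toward `v`. -/
def IsSink (o : ε → V × V) (v : V) : Prop := ∀ e, (o e).1 ≠ v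

/-- The set of acyclic orientations with unique sink `v₀`. -/
def Aset (ends : ε → Sym2 V) (v₀ : V) : Set (ε → V × V) :=
  {o | IsOrient ends o ∧ Acyclic o ∧ IsSink o v₀ ∧ ∀ v, IsSink o v → v = v₀}

end Orientations

/-- A circuit: a closed walk `u_0, u_1, …, u_m, u_0` with distinct vertices and
distinct edges. -/
structure Circuit {d : ℕ} {ε : Type*} (ends : ε → Sym2 (Fin d)) where
  m : ℕ
  v : Fin (m + 1) → Fin d
  f : Fin (m + 1) → ε
  hv : Function.Injective v
  hf : Function.Injective f
  he : ∀ k, ends (f k) = s(v k, v (k + 1))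

/-- The broken circuit obtained from a circuit: its edge set with the largest
edge removed. -/
noncomputable def broken {d : ℕ} {ε : Type*} [LinearOrder ε] {ends : ε → Sym2 (Fin d)}
    (C : Circuit ends) : Finset ε :=
  (Finset.univ.image C.f).erase
    ((Finset.univ.image C.f).max'
      ⟨C.f 0, Finset.mem_image_of_mem _ (Finset.mem_univ _)⟩)

/-- `P(α)`: partitions `τ ≤ π+(d+1)` whose blocks can be listed as `B_1,…,B_l`
with `|B_i| = α_i` and `d+1 ∈ B_1`. -/
def Pset {d : ℕ} (π : Setoid (Fin (d + 1))) (l : ℕ) (α : Fin l → ℕ) :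
    Set (Setoid (Fin (d + 2))) :=
  {τ | τ ≤ addLast π ∧ ∃ B : Fin l → Finset (Fin (d + 2)),
    (∀ x y, τ x y ↔ ∃ i, x ∈ B i ∧ y ∈ B i) ∧
    (∀ i j, i ≠ j → Disjoint (B i) (B j)) ∧
    (∀ i, (B i).card = α i) ∧
    ∃ hl : 0 < l, Fin.last (d + 1) ∈ B ⟨0, hl⟩}

/-- `G + K_{m+1}` : attach a complete graph on `{v_{d}, v_{d+1}, …, v_{d+m}}`
(`m` new vertices) to the last vertex of a graph `G` on `d+1` vertices. -/
def attachEnds {d : ℕ} {ε : Type*} (ends : ε → Sym2 (Fin (d + 1))) (m : ℕ) :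
    ε ⊕ {p : Fin (m + 1) × Fin (m + 1) // p.1 < p.2} → Sym2 (Fin (d + 1 + m))
  | Sum.inl e => (ends e).map (fun x : Fin (d + 1) => (⟨(x : ℕ), by omega⟩ : Fin (d + 1 + m)))
  | Sum.inr p => s(⟨d + (p.1.1 : ℕ), by omega⟩, ⟨d + (p.1.2 : ℕ), by omega⟩)

/-- The disjoint union `G ⊎ K_m`, with the clique on the `m` new vertices. -/
def disjEnds {d : ℕ} {ε : Type*} (ends : ε → Sym2 (Fin d)) (m : ℕ) :
    ε ⊕ {p : Fin m × Fin m // p.1 < p.2} → Sym2 (Fin (d + m))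
  | Sum.inl e => (ends e).map (Fin.castAdd m)
  | Sum.inr p => s(Fin.natAdd d p.1.1, Fin.natAdd d p.1.2)

/-- The vertex map of the contraction `G/e` for `e = u v₀`: `u` is sent to the
merged vertex, labeled `v₀`. -/
noncomputable def contrV {V : Type*} (u v₀ : V) (h : u ≠ v₀) : V → {x : V // x ≠ u} :=
  fun x => if hx : x = u then ⟨v₀, Ne.symm h⟩ else ⟨x, hx⟩


/-!
Every `D ∈ A(G, v₀)` orients `e` as `u → v₀`, and deleting an edge leaving `u` can create no
sink other than `u`. So `D ↦ D∖e` is a bijection from `A(G, v₀)` onto `Aset₂ (G∖e) u v₀`, the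
acyclic orientations of `G∖e` whose sinks are `v₀` and possibly `u`. Those with `v₀` as only
sink form `A(G∖e, v₀)`. In the others no edge leaves `u` or `v₀`, so merging the two never
touches the tail of an edge: the contraction stays acyclic with the merged vertex as unique
sink, every edge is recovered from its tail and its ends, and every orientation in
`A(G/e, v₀)` lifts.
-/

theorem Set.BijOn.ite_inl_inr {α β γ : Type*} {s t : Set α} [DecidablePred (· ∈ t)]
    {f : α → β} {g : α → γ} {b : Set β} {c : Set γ}
    (hf : BijOn f (s ∩ t) b) (hg : BijOn g (s \ t) c) :
    BijOn (fun x => if x ∈ t then Sum.inl (f x) else Sum.inr (g x)) s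
      (Sum.inl '' b ∪ Sum.inr '' c) := by
  refine ⟨fun x hx => ?_, fun x hx y hy hxy => ?_, ?_⟩
  · by_cases hxt : x ∈ t
    · simp only [hxt, ↓reduceIte]; exact Or.inl (mem_image_of_mem _ (hf.mapsTo ⟨hx, hxt⟩))
    · simp only [hxt, ↓reduceIte]; exact Or.inr (mem_image_of_mem _ (hg.mapsTo ⟨hx, hxt⟩))
  · by_cases hxt : x ∈ t <;> by_cases hyt : y ∈ t <;> simp only [hxt, hyt, ↓reduceIte,
      Sum.inl.injEq, Sum.inr.injEq, reduceCtorEq] at hxy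
    · exact hf.injOn ⟨hx, hxt⟩ ⟨hy, hyt⟩ hxy
    · exact hg.injOn ⟨hx, hxt⟩ ⟨hy, hyt⟩ hxy
  · rintro _ (⟨y, hy, rfl⟩ | ⟨y, hy, rfl⟩)
    · obtain ⟨x, ⟨hxs, hxt⟩, rfl⟩ := hf.surjOn hy
      exact ⟨x, hxs, by simp [hxt]⟩
    · obtain ⟨x, ⟨hxs, hxt⟩, rfl⟩ := hg.surjOn hy
      exact ⟨x, hxs, by simp [hxt]⟩

section Orientations

variable {V ε : Type*}

def Aset₂ (ends : ε → Sym2 V) (u v₀ : V) : Set (ε → V × V) :=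
  {o | IsOrient ends o ∧ Acyclic o ∧ IsSink o v₀ ∧ ∀ v, IsSink o v → v = u ∨ v = v₀}

theorem Aset_subset_Aset₂ {ends : ε → Sym2 V} (u : V) {v₀ : V} : Aset ends v₀ ⊆ Aset₂ ends u v₀ :=
  fun _ ⟨hor, hac, hsink, huniq⟩ => ⟨hor, hac, hsink, fun v hv => Or.inr (huniq v hv)⟩

theorem Aset₂_diff_Aset {ends : ε → Sym2 V} {u v₀ : V} (hu : u ≠ v₀) :
    Aset₂ ends u v₀ \ Aset ends v₀ = {o ∈ Aset₂ ends u v₀ | IsSink o u} := by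
  ext o
  refine ⟨fun ⟨ho, hnot⟩ => ⟨ho, ?_⟩, fun ⟨ho, hsu⟩ => ⟨ho, fun ho' => hu (ho'.2.2.2 u hsu)⟩⟩
  obtain ⟨hor, hac, hsink, hsinks⟩ := ho
  by_contra hsu
  refine hnot ⟨hor, hac, hsink, fun v hv => (hsinks v hv).resolve_left ?_⟩
  rintro rfl
  exact hsu hv

theorem not_isSink_of_apply_eq {o : ε → V × V} {e : ε} {a b : V} (h : o e = (a, b)) :
    ¬ IsSink o a :=
  fun hs => hs e (by rw [h])

/-- A directed cycle never passes through a sink, so only the edges entering non-sinks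
need to be mapped onto edges of `o'`. -/
theorem Acyclic.of_edges_map {W ε' : Type*} {o : ε → V × V} {o' : ε' → W × W} (f : V → W)
    (ho' : Acyclic o') (h : ∀ e, ¬ IsSink o (o e).2 → ∃ e', o' e' = (f (o e).1, f (o e).2)) :
    Acyclic o := by
  have hstep : ∀ {a b e}, o e = (a, b) → ¬ IsSink o b → ∃ e', o' e' = (f a, f b) := by
    intro a b e hab hb
    simpa [hab] using h e (by simpa [hab] using hb)
  have hlift : ∀ {a b}, Relation.TransGen (fun a b => ∃ e, o e = (a, b)) a b →
      ¬ IsSink o b → Relation.TransGen (fun a b => ∃ e', o' e' = (a, b)) (f a) (f b) := by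
    intro a b hab
    induction hab with
    | single hab =>
      obtain ⟨e, he⟩ := hab
      exact fun hb => .single (hstep he hb)
    | tail _ hcb ih =>
      obtain ⟨e, he⟩ := hcb
      exact fun hb => (ih (not_isSink_of_apply_eq he)).tail (hstep he hb)
  intro v hv
  obtain ⟨w, ⟨e, he⟩, -⟩ := Relation.TransGen.head'_iff.1 hv
  exact ho' (f v) (hlift hv (not_isSink_of_apply_eq he))

def deleteEdge {α : Type*} (e₀ : ε) (x : ε → α) : {e : ε // e ≠ e₀} → α :=
  fun e => x e.1

section Deletion

variable {ends : ε → Sym2 V} {e₀ : ε} {u v₀ : V} {o : ε → V × V}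

theorem apply_eq_of_mem_Aset (he : ends e₀ = s(u, v₀)) (ho : o ∈ Aset ends v₀) :
    o e₀ = (u, v₀) := by
  have h := ho.1 e₀
  rw [he, Sym2.eq_iff] at h
  rcases h with ⟨h₁, h₂⟩ | ⟨h₁, -⟩
  · exact Prod.ext h₁ h₂
  · exact absurd h₁ (ho.2.2.1 e₀)

theorem deleteEdge_mem_Aset₂ (he : ends e₀ = s(u, v₀)) (ho : o ∈ Aset ends v₀) :
    deleteEdge e₀ o ∈ Aset₂ (deleteEdge e₀ ends) u v₀ := by
  obtain ⟨hor, hac, hsink, huniq⟩ := ho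
  refine ⟨fun e => hor e.1, hac.of_edges_map id fun e _ => ⟨e.1, rfl⟩, fun e => hsink e.1,
    fun v hv => ?_⟩
  refine or_iff_not_imp_left.2 fun hvu => huniq v fun e => ?_
  by_cases h : e = e₀
  · subst h
    rw [apply_eq_of_mem_Aset he ⟨hor, hac, hsink, huniq⟩]
    exact Ne.symm hvu
  · exact hv ⟨e, h⟩

theorem exists_deleteEdge_eq (he : ends e₀ = s(u, v₀)) (hu : u ≠ v₀)
    {o' : {e : ε // e ≠ e₀} → V × V} (ho' : o' ∈ Aset₂ (deleteEdge e₀ ends) u v₀) :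
    ∃ o ∈ Aset ends v₀, deleteEdge e₀ o = o' := by
  obtain ⟨hor, hac, hsink, hsinks⟩ := ho'
  let o : ε → V × V := fun e => if h : e = e₀ then (u, v₀) else o' ⟨e, h⟩
  have ho_e₀ : o e₀ = (u, v₀) := dif_pos rfl
  have ho_ne (e : {e : ε // e ≠ e₀}) : o e.1 = o' e := dif_neg e.2
  have hsink_o : IsSink o v₀ := by
    intro e
    by_cases h : e = e₀
    · rw [h, ho_e₀]; exact hu
    · rw [ho_ne ⟨e, h⟩]; exact hsink _
  refine ⟨o, ⟨fun e => ?_, ?_, hsink_o, fun v hv => ?_⟩, funext ho_ne⟩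
  · by_cases h : e = e₀
    · rw [h, ho_e₀, he]
    · rw [ho_ne ⟨e, h⟩]; exact hor _
  · refine hac.of_edges_map id fun e he' => ?_
    by_cases h : e = e₀
    · rw [h, ho_e₀] at he'; exact absurd hsink_o he'
    · exact ⟨⟨e, h⟩, (ho_ne ⟨e, h⟩).symm⟩
  · refine (hsinks v fun e => ?_).resolve_left fun hvu => hv e₀ ?_
    · rw [← ho_ne e]; exact hv e.1
    · rw [ho_e₀, hvu]

theorem bijOn_deleteEdge (he : ends e₀ = s(u, v₀)) (hu : u ≠ v₀) :
    Set.BijOn (deleteEdge e₀) (Aset ends v₀) (Aset₂ (deleteEdge e₀ ends) u v₀) := by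
  refine ⟨fun o ho => deleteEdge_mem_Aset₂ he ho, fun o₁ ho₁ o₂ ho₂ h => ?_,
    fun o' ho' => exists_deleteEdge_eq he hu ho'⟩
  funext e
  by_cases h' : e = e₀
  · rw [h', apply_eq_of_mem_Aset he ho₁, apply_eq_of_mem_Aset he ho₂]
  · exact congrFun h ⟨e, h'⟩

end Deletion

section Contraction

variable {u v₀ : V} (hu : u ≠ v₀)

theorem contrV_of_ne {x : V} (hx : x ≠ u) : contrV u v₀ hu x = ⟨x, hx⟩ := dif_neg hx

theorem contrV_eq_iff {x : V} : contrV u v₀ hu x = ⟨v₀, hu.symm⟩ ↔ x = u ∨ x = v₀ := by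
  by_cases hx : x = u
  · simp [contrV, hx]
  · simp [contrV_of_ne hu hx, hx]

noncomputable def contractOrient (o : ε → V × V) : ε → {x : V // x ≠ u} × {x : V // x ≠ u} :=
  fun e => (contrV u v₀ hu (o e).1, contrV u v₀ hu (o e).2)

variable {ends : ε → Sym2 V}

theorem contractOrient_mem_Aset {o : ε → V × V} (ho : o ∈ Aset₂ ends u v₀) (hsu : IsSink o u) :
    contractOrient hu o ∈ Aset (Sym2.map (contrV u v₀ hu) ∘ ends) ⟨v₀, hu.symm⟩ := by
  obtain ⟨hor, hac, hsink, hsinks⟩ := ho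
  have hfst (e : ε) : contrV u v₀ hu (o e).1 = ⟨(o e).1, hsu e⟩ := contrV_of_ne hu (hsu e)
  have hsink' : IsSink (contractOrient hu o) ⟨v₀, hu.symm⟩ := fun e h =>
    hsink e (congrArg Subtype.val ((hfst e).symm.trans h))
  refine ⟨fun e => by simp [contractOrient, ← hor e], hac.of_edges_map Subtype.val
    fun e he => ⟨e, ?_⟩, hsink', ?_⟩
  · have hsnd : (o e).2 ≠ u := fun h => he (by
      change IsSink _ (contrV u v₀ hu (o e).2)
      rwa [(contrV_eq_iff hu).2 (Or.inl h)])
    simp [contractOrient, hfst, contrV_of_ne hu hsnd]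
  · rintro ⟨v, hvu⟩ hv
    refine Subtype.ext ((hsinks v fun e h => hv e ?_).resolve_left hvu)
    exact (hfst e).trans (Subtype.ext h)

theorem injOn_contractOrient :
    Set.InjOn (contractOrient hu) {o ∈ Aset₂ ends u v₀ | IsSink o u} := by
  intro o₁ ho₁ o₂ ho₂ h
  funext e
  have hfst : (o₁ e).1 = (o₂ e).1 := by
    have h₁ := congrArg Prod.fst (congrFun h e)
    simp only [contractOrient, contrV_of_ne hu (ho₁.2 e), contrV_of_ne hu (ho₂.2 e)] at h₁
    exact congrArg Subtype.val h₁
  have hends : s((o₁ e).1, (o₁ e).2) = s((o₁ e).1, (o₂ e).2) := by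
    rw [ho₁.1.1 e, hfst, ho₂.1.1 e]
  exact Prod.ext hfst (Sym2.congr_right.1 hends)

theorem exists_contractOrient_eq
    {ob : ε → {x : V // x ≠ u} × {x : V // x ≠ u}}
    (hob : ob ∈ Aset (Sym2.map (contrV u v₀ hu) ∘ ends) ⟨v₀, hu.symm⟩) :
    ∃ o ∈ {o ∈ Aset₂ ends u v₀ | IsSink o u}, contractOrient hu o = ob := by
  obtain ⟨hor, hac, hsink, huniq⟩ := hob
  have hlift (e : ε) : ∃ p : V × V, s(p.1, p.2) = ends e ∧
      contrV u v₀ hu p.1 = (ob e).1 ∧ contrV u v₀ hu p.2 = (ob e).2 := by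
    induction h : ends e using Sym2.ind with
    | h x y =>
      have h' := hor e
      simp only [Function.comp_apply, h, Sym2.map_mk, Sym2.eq_iff] at h'
      rcases h' with ⟨h₁, h₂⟩ | ⟨h₁, h₂⟩
      · exact ⟨(x, y), rfl, h₁.symm, h₂.symm⟩
      · exact ⟨(y, x), Sym2.eq_swap, h₁.symm, h₂.symm⟩
  choose o hor_o hfst hsnd using hlift
  have htail (e : ε) : (o e).1 ≠ u ∧ (o e).1 ≠ v₀ := by
    have := hsink e
    rw [← hfst e, Ne, contrV_eq_iff] at this
    exact not_or.1 this
  have hctr : contractOrient hu o = ob := funext fun e => Prod.ext (hfst e) (hsnd e)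
  refine ⟨o, ⟨⟨hor_o, ?_, fun e => (htail e).2, fun v hv => ?_⟩, fun e => (htail e).1⟩, hctr⟩
  · exact hac.of_edges_map (contrV u v₀ hu) fun e _ => ⟨e, (congrFun hctr e).symm⟩
  · refine or_iff_not_imp_left.2 fun hvu => congrArg Subtype.val (huniq ⟨v, hvu⟩ fun e h => ?_)
    rw [← hfst e, contrV_of_ne hu (htail e).1] at h
    exact hv e (congrArg Subtype.val h)

theorem bijOn_contractOrient :
    Set.BijOn (contractOrient hu) {o ∈ Aset₂ ends u v₀ | IsSink o u}
      (Aset (Sym2.map (contrV u v₀ hu) ∘ ends) ⟨v₀, hu.symm⟩) :=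
  ⟨fun _ ho => contractOrient_mem_Aset hu ho.1 ho.2, injOn_contractOrient hu,
    fun _ hob => exists_contractOrient_eq hu hob⟩

end Contraction

end Orientations

/-- The deletion-contraction bijection for acyclic orientations with a unique
sink: `D ↦ D∖e` if `D∖e ∈ A(G∖e, v₀)`, and `D ↦ D/e` otherwise, is a bijection
from `A(G, v₀)` onto `A(G∖e, v₀) ⊎ A(G/e, v₀)`. -/
theorem acyclicOrientation_bijOn {V : Type*} {ε : Type*} (ends : ε → Sym2 V)
    (e₀ : ε) (u v₀ : V) (hu : u ≠ v₀) (he : ends e₀ = s(u, v₀)) :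
    Set.BijOn
      (fun o : ε → V × V =>
        if (fun e : {e : ε // e ≠ e₀} => o e.1) ∈
            Aset (fun e : {e : ε // e ≠ e₀} => ends e.1) v₀ then
          Sum.inl (fun e : {e : ε // e ≠ e₀} => o e.1)
        else
          Sum.inr (fun e : {e : ε // e ≠ e₀} =>
            (contrV u v₀ hu (o e.1).1, contrV u v₀ hu (o e.1).2)))
      (Aset ends v₀)
      (Sum.inl '' Aset (fun e : {e : ε // e ≠ e₀} => ends e.1) v₀ ∪
        Sum.inr '' Aset (fun e : {e : ε // e ≠ e₀} => (ends e.1).map (contrV u v₀ hu))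
          ⟨v₀, Ne.symm hu⟩) := by
  have hsplit : Set.BijOn
      (fun o' => if o' ∈ Aset (deleteEdge e₀ ends) v₀ then Sum.inl o'
        else Sum.inr (contractOrient hu o'))
      (Aset₂ (deleteEdge e₀ ends) u v₀)
      (Sum.inl '' Aset (deleteEdge e₀ ends) v₀ ∪
        Sum.inr '' Aset (Sym2.map (contrV u v₀ hu) ∘ deleteEdge e₀ ends) ⟨v₀, hu.symm⟩) := by
    refine Set.BijOn.ite_inl_inr ?_ ?_
    · rw [Set.inter_eq_right.2 (Aset_subset_Aset₂ u)]
      exact Set.bijOn_id _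
    · rw [Aset₂_diff_Aset hu]
      exact bijOn_contractOrient hu
  exact hsplit.comp (bijOn_deleteEdge he hu)
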